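/- Corollary 2 (leakage and seepage of a cross-talk-free product channel): let n ≥ 1, and for k = 1,…,n let Λ_k be a trace-preserving linear map on 3×3 complex matrices and p_k, q_k reals with tr(π_c Λ_k(π_c)) = 2(1 − p_k) and tr(π_c Λ_k(I_3)) = 2(1 − p_k) + 2q_k. Let Λ be a linear map on 3^n × 3^n complex matrices such that Λ(⊗_{k} A_k) = ⊗_{k} Λ_k(A_k) for all 3×3 matrices A_1,…,A_n, where (⊗_k A_k)_{x,y} = ∏_k (A_k)_{x_k,y_k}. Then tr(Π_l · Λ(Π_c / 2^n)) = 1 − ∏_{k=1}^n (1 − p_k) and tr(Π_c · Λ(Π_l / (3^n − 2^n))) = (2^n / (3^n − 2^n)) · ( ∏_{k=1}^n (1 − p_k + q_k) − ∏_{k=1}^n (1 − p_k) ). -/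

import Mathlib

open Matrix Finset

noncomputable section

/-- The single-site computational projector π_c = |0⟩⟨0| + |1⟩⟨1| on ℂ³. -/
def piC : Matrix (Fin 3) (Fin 3) ℂ :=
  Matrix.diagonal fun x => if (x : ℕ) < 2 then 1 else 0

/-- The n-fold Kronecker product (⊗ₖ Aₖ)_{x,y} = ∏ₖ (Aₖ)_{xₖ,yₖ}. -/
def kron {n : ℕ} (A : Fin n → Matrix (Fin 3) (Fin 3) ℂ) :
    Matrix (Fin n → Fin 3) (Fin n → Fin 3) ℂ :=
  Matrix.of fun x y => ∏ k, A k (x k) (y k)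

/-- The computational projector Π_c on the n-qutrit space: the diagonal projector
onto span{|k⟩ : k ∈ {0,1}ⁿ}. -/
def compProj (n : ℕ) : Matrix (Fin n → Fin 3) (Fin n → Fin 3) ℂ :=
  Matrix.diagonal fun k => if ∀ j, (k j : ℕ) < 2 then 1 else 0

/-- The leakage projector Π_l = I − Π_c. -/
def leakProj (n : ℕ) : Matrix (Fin n → Fin 3) (Fin n → Fin 3) ℂ := 1 - compProj n

/-!
Π_c and the identity are Kronecker products of π_c and I₃, so a cross-talk-free Λ sends them to
Kronecker products of the single-site images, and every trace against Π_c factorises as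
∏ₖ tr(π_c Λₖ(·)). As Π_l = I − Π_c, both quantities are differences of two such products,
normalised using tr Λ(Π_c) = 2ⁿ, which holds because each Λₖ preserves the trace.
-/

section Kron

variable {n : ℕ}

lemma kron_mul_kron (A B : Fin n → Matrix (Fin 3) (Fin 3) ℂ) :
    kron A * kron B = kron fun k => A k * B k := by
  ext x y
  simp only [kron, mul_apply, of_apply, ← prod_mul_distrib]
  exact (Fintype.prod_sum fun k j => A k (x k) j * B k j (y k)).symm

lemma trace_kron (A : Fin n → Matrix (Fin 3) (Fin 3) ℂ) :
    trace (kron A) = ∏ k, trace (A k) := by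
  simp only [Matrix.trace, Matrix.diag, kron, of_apply]
  exact (Fintype.prod_sum fun k j => A k j j).symm

lemma kron_diagonal (d : Fin n → Fin 3 → ℂ) :
    kron (fun k => diagonal (d k)) = diagonal fun x => ∏ k, d k (x k) := by
  ext x y
  by_cases h : x = y
  · subst h; simp [kron]
  · obtain ⟨j, hj⟩ := Function.ne_iff.mp h
    rw [diagonal_apply_ne _ h]
    exact prod_eq_zero (mem_univ j) (diagonal_apply_ne _ hj)

lemma kron_piC : kron (fun _ : Fin n => piC) = compProj n := by
  simp only [piC, kron_diagonal, prod_boole, mem_univ, true_implies, compProj]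

lemma kron_one : kron (fun _ : Fin n => (1 : Matrix (Fin 3) (Fin 3) ℂ)) = 1 := by
  simp only [← diagonal_one, kron_diagonal, prod_const_one]

end Kron

lemma trace_piC : trace piC = 2 := by
  simp only [piC, Matrix.trace, Matrix.diag, diagonal_apply_eq, Fin.sum_univ_three]
  norm_num

section ProductChannel

variable {n : ℕ} {Λk : Fin n → (Matrix (Fin 3) (Fin 3) ℂ →ₗ[ℂ] Matrix (Fin 3) (Fin 3) ℂ)}
  {Λ : Matrix (Fin n → Fin 3) (Fin n → Fin 3) ℂ →ₗ[ℂ]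
    Matrix (Fin n → Fin 3) (Fin n → Fin 3) ℂ}

lemma trace_map_kron (htp : ∀ k A, trace (Λk k A) = trace A)
    (hΛ : ∀ A, Λ (kron A) = kron fun k => Λk k (A k)) (A : Fin n → Matrix (Fin 3) (Fin 3) ℂ) :
    trace (Λ (kron A)) = ∏ k, trace (A k) := by
  simp only [hΛ, trace_kron, htp]

lemma trace_compProj_mul_map_kron (hΛ : ∀ A, Λ (kron A) = kron fun k => Λk k (A k))
    (A : Fin n → Matrix (Fin 3) (Fin 3) ℂ) :
    trace (compProj n * Λ (kron A)) = ∏ k, trace (piC * Λk k (A k)) := by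
  rw [hΛ, ← kron_piC, kron_mul_kron, trace_kron]

end ProductChannel

theorem crosstalk_free_leakage_general (n : ℕ)
    (Λk : Fin n → (Matrix (Fin 3) (Fin 3) ℂ →ₗ[ℂ] Matrix (Fin 3) (Fin 3) ℂ))
    (p q : Fin n → ℝ)
    (htp : ∀ (k : Fin n) (A : Matrix (Fin 3) (Fin 3) ℂ),
      Matrix.trace (Λk k A) = Matrix.trace A)
    (hp : ∀ k : Fin n,
      Matrix.trace (piC * Λk k piC) = ((2 * (1 - p k) : ℝ) : ℂ))
    (hq : ∀ k : Fin n,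
      Matrix.trace (piC * Λk k 1) = ((2 * (1 - p k) + 2 * q k : ℝ) : ℂ))
    (Λ : Matrix (Fin n → Fin 3) (Fin n → Fin 3) ℂ →ₗ[ℂ]
      Matrix (Fin n → Fin 3) (Fin n → Fin 3) ℂ)
    (hΛ : ∀ A : Fin n → Matrix (Fin 3) (Fin 3) ℂ,
      Λ (kron A) = kron fun k => Λk k (A k)) :
    Matrix.trace (leakProj n * Λ (((2 : ℂ) ^ n)⁻¹ • compProj n)) =
        1 - ∏ k, (1 - (p k : ℂ)) ∧
      Matrix.trace (compProj n * Λ (((3 : ℂ) ^ n - 2 ^ n)⁻¹ • leakProj n)) =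
        ((2 : ℂ) ^ n / ((3 : ℂ) ^ n - 2 ^ n)) *
          (∏ k, (1 - (p k : ℂ) + (q k : ℂ)) - ∏ k, (1 - (p k : ℂ))) := by
  have h_trace : trace (Λ (compProj n)) = 2 ^ n := by
    simp [← kron_piC, trace_map_kron htp hΛ, trace_piC]
  have h_cc : trace (compProj n * Λ (compProj n)) = 2 ^ n * ∏ k, (1 - (p k : ℂ)) := by
    simpa [kron_piC, hp, prod_mul_distrib] using trace_compProj_mul_map_kron hΛ fun _ => piC
  have h_c1 : trace (compProj n * Λ 1) = 2 ^ n * ∏ k, (1 - (p k : ℂ) + (q k : ℂ)) := by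
    rw [← kron_one, trace_compProj_mul_map_kron hΛ]
    simp [hq, ← mul_add, prod_mul_distrib]
  constructor
  · rw [leakProj, map_smul, Matrix.mul_smul, trace_smul, sub_mul, one_mul, trace_sub, h_trace,
      h_cc, smul_eq_mul]
    field_simp
  · rw [leakProj, map_smul, map_sub, Matrix.mul_smul, trace_smul, mul_sub, trace_sub, h_c1,
      h_cc, smul_eq_mul]
    ring

/-- Corollary 2 (leakage and seepage of a cross-talk-free product channel). -/
theorem crosstalk_free_leakage (n : ℕ) (hn : 1 ≤ n)
    (Λk : Fin n → (Matrix (Fin 3) (Fin 3) ℂ →ₗ[ℂ] Matrix (Fin 3) (Fin 3) ℂ))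
    (p q : Fin n → ℝ)
    (htp : ∀ (k : Fin n) (A : Matrix (Fin 3) (Fin 3) ℂ),
      Matrix.trace (Λk k A) = Matrix.trace A)
    (hp : ∀ k : Fin n,
      Matrix.trace (piC * Λk k piC) = ((2 * (1 - p k) : ℝ) : ℂ))
    (hq : ∀ k : Fin n,
      Matrix.trace (piC * Λk k 1) = ((2 * (1 - p k) + 2 * q k : ℝ) : ℂ))
    (Λ : Matrix (Fin n → Fin 3) (Fin n → Fin 3) ℂ →ₗ[ℂ]
      Matrix (Fin n → Fin 3) (Fin n → Fin 3) ℂ)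
    (hΛ : ∀ A : Fin n → Matrix (Fin 3) (Fin 3) ℂ,
      Λ (kron A) = kron fun k => Λk k (A k)) :
    Matrix.trace (leakProj n * Λ (((2 : ℂ) ^ n)⁻¹ • compProj n)) =
        1 - ∏ k, (1 - (p k : ℂ)) ∧
      Matrix.trace (compProj n * Λ (((3 : ℂ) ^ n - 2 ^ n)⁻¹ • leakProj n)) =
        ((2 : ℂ) ^ n / ((3 : ℂ) ^ n - 2 ^ n)) *
          (∏ k, (1 - (p k : ℂ) + (q k : ℂ)) - ∏ k, (1 - (p k : ℂ))) :=
  crosstalk_free_leakage_general n Λk p q htp hp hq Λ hΛ
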